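/- arXiv:1210.7589 — 2 statements merged into one kernel-verified Lean document; each statement's English description precedes it below -/
import Mathlib

section
/- Let X be a topological space and F a decomposition of X (a family of pairwise disjoint nonempty subsets whose union is X). If F is pointwise almost periodic (i.e., the family of closures of elements of F is again a decomposition of X), then F is recurrent (every element of F is either closed or non-proper, where L is proper if closure(L) \ L is closed). -/
open Set Topology

def IsDecomposition {X : Type*} (F : Set (Set X)) : Prop :=
  (∀ L ∈ F, L.Nonempty) ∧ (∀ L ∈ F, ∀ L' ∈ F, L ≠ L' → Disjoint L L') ∧ ⋃₀ F = univ

def IsProperSet {X : Type*} [TopologicalSpace X] (L : Set X) : Prop :=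
  IsClosed (closure L \ L)

def IsRecurrentSet {X : Type*} [TopologicalSpace X] (L : Set X) : Prop :=
  IsClosed L ∨ ¬ IsProperSet L

/-!
Let `L ∈ F` be proper but not closed, and pick `x ∈ closure L \ L`; it lies in some other `L' ∈ F`.
Since the closures form a decomposition and `x ∈ closure L ∩ closure L'`, we get
`closure L' = closure L`, so `L' ⊆ closure L \ L`. This set is closed, hence it contains
`closure L' = closure L ⊇ L`, which is absurd as `L` is nonempty.
-/

namespace IsDecomposition

variable {X : Type*} {F : Set (Set X)}

theorem pairwiseDisjoint (hF : IsDecomposition F) : F.PairwiseDisjoint id :=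
  hF.2.1

theorem exists_mem (hF : IsDecomposition F) (x : X) : ∃ L ∈ F, x ∈ L :=
  mem_sUnion.1 (hF.2.2 ▸ mem_univ x)

end IsDecomposition

theorem IsProperSet.not_subset_closure_diff {X : Type*} [TopologicalSpace X] {L B : Set X}
    (hL : IsProperSet L) (hne : L.Nonempty) (hB : closure B = closure L) :
    ¬ B ⊆ closure L \ L := by
  intro hsub
  obtain ⟨z, hz⟩ := hne
  have hcl : closure L ⊆ closure L \ L := hB.symm.subset.trans (closure_minimal hsub hL)
  exact (hcl (subset_closure hz)).2 hz

/-- If a decomposition is pointwise almost periodic (its family of closures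
is again a decomposition), then it is recurrent. -/
theorem pap_implies_recurrent {X : Type*} [TopologicalSpace X] (F : Set (Set X))
    (hF : IsDecomposition F)
    (hpap : IsDecomposition ((fun L => closure L) '' F)) :
    ∀ L ∈ F, IsRecurrentSet L := by
  intro L hL
  refine or_iff_not_imp_left.mpr fun hnc hprop => ?_
  obtain ⟨x, hxcl, hxL⟩ : (closure L \ L).Nonempty :=
    sdiff_nonempty.2 (mt isClosed_of_closure_subset hnc)
  obtain ⟨L', hL', hxL'⟩ := hF.exists_mem x
  have hclo : closure L' = closure L :=
    hpap.pairwiseDisjoint.elim_set ⟨L', hL', rfl⟩ ⟨L, hL, rfl⟩ x (subset_closure hxL') hxcl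
  have hsub : L' ⊆ closure L \ L := fun y hy =>
    ⟨hclo ▸ subset_closure hy,
     fun hyL => hxL (hF.pairwiseDisjoint.elim_set hL' hL y hy hyL ▸ hxL')⟩
  exact hprop.not_subset_closure_diff (hF.1 L hL) hclo hsub
end

section
/- Let X be a topological space, F a pointwise almost periodic decomposition of X, and L an element of F that is not closed. Then closure(L) = closure(closure(L) \ L); in particular closure(L) \ L is not closed, so L is not proper. -/
open Set Topology

/-! A point `y` of `closure L \ L` lies in another element `L'`; almost periodicity forces
`closure L' = closure L`, and `L'` is disjoint from `L`, so `L' ⊆ closure L \ L` is dense in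
`closure L`. If `closure L \ L` were closed it would then contain `L`, which is nonempty. -/

namespace IsDecomposition

variable {X : Type*} {F : Set (Set X)}

theorem disjoint_of_ne (hF : IsDecomposition F) {L L' : Set X} (hL : L ∈ F) (hL' : L' ∈ F)
    (hne : L ≠ L') : Disjoint L L' :=
  hF.2.1 L hL L' hL' hne

variable [TopologicalSpace X]

theorem closure_eq_of_mem_closure (hpap : IsDecomposition ((fun L => closure L) '' F))
    {L L' : Set X} (hL : L ∈ F) (hL' : L' ∈ F) {y : X} (hy : y ∈ closure L) (hy' : y ∈ L') :
    closure L' = closure L := by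
  by_contra hne
  exact (hpap.disjoint_of_ne (mem_image_of_mem _ hL') (mem_image_of_mem _ hL) hne).ne_of_mem
    (subset_closure hy') hy rfl

theorem closure_eq_closure_diff (hF : IsDecomposition F)
    (hpap : IsDecomposition ((fun L => closure L) '' F)) {L : Set X} (hL : L ∈ F)
    (hnc : ¬ IsClosed L) : closure L = closure (closure L \ L) := by
  obtain ⟨y, hy, hyL⟩ := sdiff_nonempty.2 (mt closure_subset_iff_isClosed.1 hnc)
  obtain ⟨L', hL', hyL'⟩ := hF.exists_mem y
  have hcl : closure L' = closure L := hpap.closure_eq_of_mem_closure hL hL' hy hyL'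
  have hdisj : Disjoint L' L :=
    hF.disjoint_of_ne hL' hL fun h => hyL (h ▸ hyL')
  have hsub : L' ⊆ closure L \ L := subset_sdiff.2 ⟨hcl ▸ subset_closure, hdisj⟩
  refine subset_antisymm ?_ (closure_minimal sdiff_subset isClosed_closure)
  calc closure L = closure L' := hcl.symm
    _ ⊆ closure (closure L \ L) := closure_mono hsub

end IsDecomposition

theorem not_isClosed_closure_diff {X : Type*} [TopologicalSpace X] {L : Set X}
    (hne : L.Nonempty) (h : closure L = closure (closure L \ L)) :
    ¬ IsClosed (closure L \ L) := by
  intro hcl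
  obtain ⟨x, hx⟩ := hne
  have hx' : x ∈ closure L \ L := hcl.closure_eq ▸ h ▸ subset_closure hx
  exact hx'.2 hx

/-- For a pointwise almost periodic decomposition, any non-closed element L satisfies
closure L = closure (closure L \ L); hence closure L \ L is not closed and L is not proper. -/
theorem pap_nonclosed_not_proper {X : Type*} [TopologicalSpace X] (F : Set (Set X))
    (hF : IsDecomposition F)
    (hpap : IsDecomposition ((fun L => closure L) '' F))
    (L : Set X) (hL : L ∈ F) (hnc : ¬ IsClosed L) :
    closure L = closure (closure L \ L) ∧ ¬ IsClosed (closure L \ L) ∧ ¬ IsProperSet L := by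
  have hdense := hF.closure_eq_closure_diff hpap hL hnc
  have hnot := not_isClosed_closure_diff (hF.1 L hL) hdense
  exact ⟨hdense, hnot, hnot⟩
end
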